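/- Let Ω₁,…,Ω_k with Ω_i ⊆ ℂ^{n_i} be bounded domains and let Ω = Ω₁ × Ω₂ × ⋯ × Ω_k ⊆ ℂⁿ, where n = n₁ + n₂ + ⋯ + n_k. Then for any a = (a₁, a₂, …, a_k) ∈ Ω with a_i ∈ Ω_i, one has T_Ω(a) ≥ min_{1 ≤ i ≤ k} T_{Ω_i}(a_i). -/

import Mathlib

open Metric Set Matrix
open scoped ComplexOrder

noncomputable section

/-- The open polydisk of radius `r` centered at the origin in `ℂ^ι`:
`𝔻^ι(0,r) = { w : |wᵢ| < r for all i }`. -/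
def polydisk (ι : Type*) [Fintype ι] (r : ℝ) : Set (EuclideanSpace ℂ ι) :=
  {w | ∀ i, ‖w i‖ < r}

/-- The squeezing function corresponding to the polydisk:
`T_Ω(z) = sup { r > 0 : ∃ injective holomorphic f : Ω → 𝔻ⁿ, f z = 0, 𝔻ⁿ(0,r) ⊆ f(Ω) }`. -/
def squeezingT {ι : Type*} [Fintype ι] (Ω : Set (EuclideanSpace ℂ ι))
    (z : EuclideanSpace ℂ ι) : ℝ :=
  sSup {r : ℝ | 0 < r ∧ ∃ f : EuclideanSpace ℂ ι → EuclideanSpace ℂ ι,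
    DifferentiableOn ℂ f Ω ∧ Set.InjOn f Ω ∧ f '' Ω ⊆ polydisk ι 1 ∧
    f z = 0 ∧ polydisk ι r ⊆ f '' Ω}

/-- The squeezing function corresponding to the Euclidean unit ball:
`S_Ω(z) = sup { r > 0 : ∃ injective holomorphic f : Ω → Bⁿ, f z = 0, Bⁿ(0,r) ⊆ f(Ω) }`. -/
def squeezingS {ι : Type*} [Fintype ι] (Ω : Set (EuclideanSpace ℂ ι))
    (z : EuclideanSpace ℂ ι) : ℝ :=
  sSup {r : ℝ | 0 < r ∧ ∃ f : EuclideanSpace ℂ ι → EuclideanSpace ℂ ι,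
    DifferentiableOn ℂ f Ω ∧ Set.InjOn f Ω ∧ f '' Ω ⊆ ball (0 : EuclideanSpace ℂ ι) 1 ∧
    f z = 0 ∧ ball (0 : EuclideanSpace ℂ ι) r ⊆ f '' Ω}

/-- A bounded domain in `ℂ^ι`: a nonempty connected bounded open set. -/
def IsBoundedDomain {ι : Type*} [Fintype ι] (Ω : Set (EuclideanSpace ℂ ι)) : Prop :=
  IsOpen Ω ∧ IsConnected Ω ∧ Bornology.IsBounded Ω

/-- The `i`-th block of a vector in `ℂ^{n₁} × ⋯ × ℂ^{n_k}` viewed inside `ℂ^{n₁+⋯+n_k}`. -/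
def blockOf {k : ℕ} {n : Fin k → ℕ} (z : EuclideanSpace ℂ ((i : Fin k) × Fin (n i)))
    (i : Fin k) : EuclideanSpace ℂ (Fin (n i)) := WithLp.toLp 2 (fun j => z ⟨i, j⟩)

/-- The product `Ω₁ × ⋯ × Ω_k` viewed as a subset of `ℂ^{n₁+⋯+n_k}`. -/
def prodDomain {k : ℕ} {n : Fin k → ℕ} (Ω : ∀ i, Set (EuclideanSpace ℂ (Fin (n i)))) :
    Set (EuclideanSpace ℂ ((i : Fin k) × Fin (n i))) :=
  {z | ∀ i, blockOf z i ∈ Ω i}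

/-! If each `Ωᵢ` is mapped onto a set between `𝔻^{nᵢ}(0,r)` and `𝔻^{nᵢ}` by an injective
holomorphic `fᵢ` with `fᵢ(aᵢ) = 0`, then `f₁ × ⋯ × f_k` maps `Ω₁ × ⋯ × Ω_k` onto a set between
`𝔻ⁿ(0,r)` and `𝔻ⁿ`, because a polydisk is the product of the polydisks of its blocks. So every
radius admissible for all factors is admissible for the product, and `T_Ω(a) ≥ minᵢ T_{Ωᵢ}(aᵢ)`
follows by taking suprema. -/

section SqueezingRadii

variable {ι : Type*} [Fintype ι]

def squeezingRadii (Ω : Set (EuclideanSpace ℂ ι)) (z : EuclideanSpace ℂ ι) : Set ℝ :=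
  {r : ℝ | 0 < r ∧ ∃ f : EuclideanSpace ℂ ι → EuclideanSpace ℂ ι,
    DifferentiableOn ℂ f Ω ∧ Set.InjOn f Ω ∧ f '' Ω ⊆ polydisk ι 1 ∧
    f z = 0 ∧ polydisk ι r ⊆ f '' Ω}

theorem squeezingT_eq_sSup (Ω : Set (EuclideanSpace ℂ ι)) (z : EuclideanSpace ℂ ι) :
    squeezingT Ω z = sSup (squeezingRadii Ω z) :=
  rfl

theorem squeezingT_nonneg (Ω : Set (EuclideanSpace ℂ ι)) (z : EuclideanSpace ℂ ι) :
    0 ≤ squeezingT Ω z :=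
  Real.sSup_nonneg fun _ hr => hr.1.le

theorem zero_mem_polydisk {r : ℝ} (hr : 0 < r) : (0 : EuclideanSpace ℂ ι) ∈ polydisk ι r :=
  fun i => by simpa using hr

theorem polydisk_mono {r s : ℝ} (h : r ≤ s) : polydisk ι r ⊆ polydisk ι s :=
  fun _ hw i => (hw i).trans_le h

theorem le_one_of_mem_squeezingRadii [Nonempty ι] {Ω : Set (EuclideanSpace ℂ ι)}
    {z : EuclideanSpace ℂ ι} {r : ℝ} (hr : r ∈ squeezingRadii Ω z) : r ≤ 1 := by
  obtain ⟨-, f, -, -, hf_maps, -, hf_covers⟩ := hr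
  by_contra! h
  have hone : (WithLp.toLp 2 fun _ => 1 : EuclideanSpace ℂ ι) ∈ polydisk ι r :=
    fun _ => by simpa using h
  simpa using hf_maps (hf_covers hone) (Classical.arbitrary ι)

theorem bddAbove_squeezingRadii [Nonempty ι] (Ω : Set (EuclideanSpace ℂ ι))
    (z : EuclideanSpace ℂ ι) : BddAbove (squeezingRadii Ω z) :=
  ⟨1, fun _ => le_one_of_mem_squeezingRadii⟩

theorem mem_squeezingRadii_of_le {Ω : Set (EuclideanSpace ℂ ι)} {z : EuclideanSpace ℂ ι}
    {r s : ℝ} (hs : s ∈ squeezingRadii Ω z) (hr : 0 < r) (hrs : r ≤ s) :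
    r ∈ squeezingRadii Ω z := by
  obtain ⟨-, f, hf_diff, hf_inj, hf_maps, hf_zero, hf_covers⟩ := hs
  exact ⟨hr, f, hf_diff, hf_inj, hf_maps, hf_zero, (polydisk_mono hrs).trans hf_covers⟩

theorem mem_squeezingRadii_of_lt_squeezingT {Ω : Set (EuclideanSpace ℂ ι)}
    {z : EuclideanSpace ℂ ι} {r : ℝ} (hr : 0 < r) (hrT : r < squeezingT Ω z) :
    r ∈ squeezingRadii Ω z := by
  have hne : (squeezingRadii Ω z).Nonempty := by
    by_contra! he
    rw [squeezingT_eq_sSup, he, Real.sSup_empty] at hrT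
    exact hr.not_gt hrT
  obtain ⟨s, hs, hrs⟩ := exists_lt_of_lt_csSup hne hrT
  exact mem_squeezingRadii_of_le hs hr hrs.le

/-- In dimension zero every radius is admissible as soon as `Ω ≠ ∅`, so the supremum is the junk
value `sSup` of an unbounded set. -/
theorem squeezingT_eq_zero_of_isEmpty [IsEmpty ι] (Ω : Set (EuclideanSpace ℂ ι))
    (z : EuclideanSpace ℂ ι) : squeezingT Ω z = 0 := by
  rcases Ω.eq_empty_or_nonempty with rfl | ⟨x, hx⟩
  · have hempty : squeezingRadii (∅ : Set (EuclideanSpace ℂ ι)) z = ∅ := by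
      refine eq_empty_of_forall_notMem ?_
      rintro r ⟨hr, f, -, -, -, -, hf_covers⟩
      simpa using hf_covers (zero_mem_polydisk hr)
    rw [squeezingT_eq_sSup, hempty, Real.sSup_empty]
  · refine Real.sSup_of_not_bddAbove fun hbdd => not_bddAbove_Ioi (0 : ℝ) (hbdd.mono ?_)
    exact fun r hr => ⟨hr, id, differentiableOn_id, fun _ _ _ _ _ => Subsingleton.elim _ _,
      fun _ _ i => isEmptyElim i, Subsingleton.elim _ _, fun _ _ => ⟨x, hx, Subsingleton.elim _ _⟩⟩

theorem nonempty_of_squeezingT_pos {Ω : Set (EuclideanSpace ℂ ι)} {z : EuclideanSpace ℂ ι}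
    (h : 0 < squeezingT Ω z) : Nonempty ι := by
  by_contra! hι
  exact h.ne' (squeezingT_eq_zero_of_isEmpty Ω z)

end SqueezingRadii

section Blocks

variable {k : ℕ} {n : Fin k → ℕ}

def ofBlocks (w : ∀ i, EuclideanSpace ℂ (Fin (n i))) :
    EuclideanSpace ℂ ((i : Fin k) × Fin (n i)) :=
  WithLp.toLp 2 fun p => w p.1 p.2

@[simp]
theorem blockOf_ofBlocks (w : ∀ i, EuclideanSpace ℂ (Fin (n i))) (i : Fin k) :
    blockOf (ofBlocks w) i = w i :=
  rfl

@[simp]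
theorem blockOf_zero (i : Fin k) :
    blockOf (0 : EuclideanSpace ℂ ((j : Fin k) × Fin (n j))) i = 0 :=
  rfl

theorem ext_blockOf {z z' : EuclideanSpace ℂ ((i : Fin k) × Fin (n i))}
    (h : ∀ i, blockOf z i = blockOf z' i) : z = z' := by
  ext p
  exact congrArg (· p.2) (h p.1)

theorem differentiable_blockOf (i : Fin k) :
    Differentiable ℂ fun z : EuclideanSpace ℂ ((j : Fin k) × Fin (n j)) => blockOf z i :=
  differentiable_euclidean.2 fun j =>
    (EuclideanSpace.proj (𝕜 := ℂ) (⟨i, j⟩ : (j : Fin k) × Fin (n j))).differentiable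

theorem mem_polydisk_iff_forall_blockOf_mem {w : EuclideanSpace ℂ ((i : Fin k) × Fin (n i))}
    {r : ℝ} : w ∈ polydisk _ r ↔ ∀ i, blockOf w i ∈ polydisk (Fin (n i)) r :=
  ⟨fun h i j => h ⟨i, j⟩, fun h p => h p.1 p.2⟩

def blockwiseMap (f : ∀ i, EuclideanSpace ℂ (Fin (n i)) → EuclideanSpace ℂ (Fin (n i)))
    (z : EuclideanSpace ℂ ((i : Fin k) × Fin (n i))) :
    EuclideanSpace ℂ ((i : Fin k) × Fin (n i)) :=
  ofBlocks fun i => f i (blockOf z i)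

@[simp]
theorem blockOf_blockwiseMap
    (f : ∀ i, EuclideanSpace ℂ (Fin (n i)) → EuclideanSpace ℂ (Fin (n i)))
    (z : EuclideanSpace ℂ ((i : Fin k) × Fin (n i))) (i : Fin k) :
    blockOf (blockwiseMap f z) i = f i (blockOf z i) :=
  rfl

variable {f : ∀ i, EuclideanSpace ℂ (Fin (n i)) → EuclideanSpace ℂ (Fin (n i))}
  {Ω : ∀ i, Set (EuclideanSpace ℂ (Fin (n i)))}

theorem DifferentiableOn.blockwiseMap (hf : ∀ i, DifferentiableOn ℂ (f i) (Ω i)) :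
    DifferentiableOn ℂ (blockwiseMap f) (prodDomain Ω) :=
  differentiableOn_euclidean.2 fun p =>
    (differentiableOn_euclidean.1 (hf p.1) p.2).comp (differentiable_blockOf p.1).differentiableOn
      fun _ hz => hz p.1

theorem Set.InjOn.blockwiseMap (hf : ∀ i, InjOn (f i) (Ω i)) :
    InjOn (blockwiseMap f) (prodDomain Ω) := fun _ hx _ hy hxy =>
  ext_blockOf fun i => hf i (hx i) (hy i) (by simpa using congrArg (blockOf · i) hxy)

theorem blockwiseMap_image_prodDomain_subset_polydisk {r : ℝ}
    (hf : ∀ i, f i '' Ω i ⊆ polydisk _ r) :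
    blockwiseMap f '' prodDomain Ω ⊆ polydisk _ r := by
  rintro _ ⟨z, hz, rfl⟩
  exact mem_polydisk_iff_forall_blockOf_mem.2 fun i => hf i ⟨_, hz i, rfl⟩

theorem polydisk_subset_blockwiseMap_image_prodDomain {r : ℝ}
    (hf : ∀ i, polydisk _ r ⊆ f i '' Ω i) :
    polydisk _ r ⊆ blockwiseMap f '' prodDomain Ω := by
  intro w hw
  choose z hz hfz using fun i => hf i (mem_polydisk_iff_forall_blockOf_mem.1 hw i)
  exact ⟨ofBlocks z, hz, ext_blockOf fun i => by simp [hfz]⟩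

theorem mem_squeezingRadii_prodDomain {a : EuclideanSpace ℂ ((i : Fin k) × Fin (n i))} {r : ℝ}
    (hr : 0 < r) (h : ∀ i, r ∈ squeezingRadii (Ω i) (blockOf a i)) :
    r ∈ squeezingRadii (prodDomain Ω) a := by
  choose _ f hf_diff hf_inj hf_maps hf_zero hf_covers using h
  exact ⟨hr, blockwiseMap f, .blockwiseMap hf_diff, .blockwiseMap hf_inj,
    blockwiseMap_image_prodDomain_subset_polydisk hf_maps,
    ext_blockOf fun i => by simp [hf_zero],
    polydisk_subset_blockwiseMap_image_prodDomain hf_covers⟩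

end Blocks

theorem squeezingT_product_lower_bound_general (k : ℕ) (hk : 0 < k) (n : Fin k → ℕ)
    (Ω : ∀ i, Set (EuclideanSpace ℂ (Fin (n i))))
    (a : EuclideanSpace ℂ ((i : Fin k) × Fin (n i))) :
    squeezingT (prodDomain Ω) a ≥
      Finset.univ.inf' (Finset.univ_nonempty_iff.mpr ⟨⟨0, hk⟩⟩)
        (fun i : Fin k => squeezingT (Ω i) (blockOf a i)) := by
  set m := Finset.univ.inf' (Finset.univ_nonempty_iff.mpr ⟨⟨0, hk⟩⟩)
    (fun i : Fin k => squeezingT (Ω i) (blockOf a i))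
  have hm_le : ∀ i, m ≤ squeezingT (Ω i) (blockOf a i) := fun i =>
    Finset.inf'_le _ (Finset.mem_univ i)
  rcases le_or_gt m 0 with hm | hm
  · exact hm.trans (squeezingT_nonneg _ _)
  obtain ⟨j⟩ := nonempty_of_squeezingT_pos (hm.trans_le (hm_le ⟨0, hk⟩))
  have : Nonempty ((i : Fin k) × Fin (n i)) := ⟨⟨⟨0, hk⟩, j⟩⟩
  refine le_of_forall_lt_imp_le_of_dense fun r hrm => ?_
  rcases le_or_gt r 0 with hr | hr
  · exact hr.trans (squeezingT_nonneg _ _)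
  exact le_csSup (bddAbove_squeezingRadii _ _) <| mem_squeezingRadii_prodDomain hr fun i =>
    mem_squeezingRadii_of_lt_squeezingT hr (hrm.trans_le (hm_le i))

/-- Lower bound for the polydisk-squeezing function of a product domain:
`T_Ω(a) ≥ min_{1 ≤ i ≤ k} T_{Ωᵢ}(aᵢ)`. -/
theorem squeezingT_product_lower_bound (k : ℕ) (hk : 0 < k) (n : Fin k → ℕ)
    (Ω : ∀ i, Set (EuclideanSpace ℂ (Fin (n i)))) (hΩ : ∀ i, IsBoundedDomain (Ω i))
    (a : EuclideanSpace ℂ ((i : Fin k) × Fin (n i))) (ha : a ∈ prodDomain Ω) :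
    squeezingT (prodDomain Ω) a ≥
      Finset.univ.inf' (Finset.univ_nonempty_iff.mpr ⟨⟨0, hk⟩⟩)
        (fun i : Fin k => squeezingT (Ω i) (blockOf a i)) :=
  squeezingT_product_lower_bound_general k hk n Ω a
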